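/- arXiv:1406.3842 — 2 statements merged into one kernel-verified Lean document; each statement's English description precedes it below -/
import Mathlib

section
/- (Aoki–Rolewicz) Let X be a vector space with a quasi-norm satisfying ‖x+y‖ ≤ C(‖x‖+‖y‖) with constant C ≥ 1. Let p ∈ (0,1] be defined by 2^{1/p} = 2C. Then there is an equivalent p-norm on X, i.e. a functional |||·||| with |||x+y|||^p ≤ |||x|||^p + |||y|||^p and (1/K)‖x‖ ≤ |||x||| ≤ K‖x‖ for some constant K. -/
/-!
Put `r = q ^ p`. Since `2 ^ (1/p) = 2C`, the quasi-triangle inequality becomes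
`r (x + y) ≤ 2 max (r x) (r y)`. Placing vectors `xᵢ` at depths `kᵢ` of a binary tree with
`∑ 2^(-kᵢ) ≤ 1` (Kraft's inequality) and adding them up along the tree gives
`r (∑ xᵢ) ≤ maxᵢ 2^kᵢ r xᵢ`; the choice `2^(-kᵢ) ≈ r xᵢ / ∑ⱼ r xⱼ` then yields
`r (∑ xᵢ) ≤ 2 ∑ r xᵢ`. So the infimum of `∑ r xᵢ` over all decompositions `x = ∑ xᵢ` is
subadditive and lies between `r x / 2` and `r x`, and its `p`-th root is the required `p`-norm,
with `K = 2 ^ (1/p)`.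
-/

theorem Multiset.exists_eq_cons_cons_of_not_nodup_map {α β : Type*} {f : α → β}
    {s : Multiset α} (h : ¬(s.map f).Nodup) : ∃ a b t, s = a ::ₘ b ::ₘ t ∧ f a = f b := by
  classical
  obtain ⟨c, u, hcu⟩ : ∃ c u, s.map f = c ::ₘ c ::ₘ u := by
    simpa [Multiset.nodup_iff_ne_cons_cons] using h
  obtain ⟨a, ha, hac, hu⟩ := (Multiset.map_eq_cons f s _ c).2 hcu
  obtain ⟨b, hb, hbc, -⟩ := (Multiset.map_eq_cons f _ _ c).2 hu
  exact ⟨a, b, (s.erase a).erase b, by rw [Multiset.cons_erase hb, Multiset.cons_erase ha],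
    hac.trans hbc.symm⟩

section Kraft

variable {G : Type*}

/-- A pair `(x, k)` records a vector `x` placed at depth `k` of a binary tree. -/
noncomputable def kraftSum (s : Multiset (G × ℕ)) : ℝ := (s.map fun a => (2⁻¹ : ℝ) ^ a.2).sum

@[simp]
theorem kraftSum_zero : kraftSum (0 : Multiset (G × ℕ)) = 0 := by simp [kraftSum]

@[simp]
theorem kraftSum_cons (a : G × ℕ) (s : Multiset (G × ℕ)) :
    kraftSum (a ::ₘ s) = 2⁻¹ ^ a.2 + kraftSum s := by simp [kraftSum]

theorem kraftSum_nonneg (s : Multiset (G × ℕ)) : 0 ≤ kraftSum s :=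
  Multiset.sum_nonneg (Multiset.forall_mem_map_iff.2 fun _ _ => by positivity)

theorem kraftSum_pos {s : Multiset (G × ℕ)} (hs : s ≠ 0) : 0 < kraftSum s := by
  obtain ⟨a, ha⟩ := Multiset.exists_mem_of_ne_zero hs
  obtain ⟨t, rfl⟩ := Multiset.exists_cons_of_mem ha
  rw [kraftSum_cons]
  have := kraftSum_nonneg t
  positivity

theorem kraftSum_le_of_nodup {s : Multiset (G × ℕ)} (hs : (s.map Prod.snd).Nodup) {d : ℕ}
    (hd : ∀ a ∈ s, d < a.2) : kraftSum s ≤ 2⁻¹ ^ d := by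
  classical
  set T : Finset ℕ := ⟨s.map Prod.snd, hs⟩
  have hT : T ⊆ Finset.Ico (d + 1) (T.sup id + 1) := fun k hk => by
    obtain ⟨a, ha, rfl⟩ := Multiset.mem_map.1 hk
    exact Finset.mem_Ico.2 ⟨hd a ha, Nat.lt_succ_of_le (Finset.le_sup (f := id) hk)⟩
  calc kraftSum s = ∑ k ∈ T, (2⁻¹ : ℝ) ^ k := by simp [kraftSum, T, Finset.sum, Multiset.map_map]
    _ ≤ ∑ k ∈ Finset.Ico (d + 1) (T.sup id + 1), (2⁻¹ : ℝ) ^ k :=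
      Finset.sum_le_sum_of_subset_of_nonneg hT fun _ _ _ => by positivity
    _ ≤ 2⁻¹ ^ (d + 1) / (1 - 2⁻¹) := geom_sum_Ico_le_of_lt_one (by norm_num) (by norm_num)
    _ = 2⁻¹ ^ d := by ring

theorem lt_of_kraftSum_cons_le {a : G × ℕ} {t : Multiset (G × ℕ)} {j : ℕ} (ht : t ≠ 0)
    (h : kraftSum (a ::ₘ t) ≤ 2⁻¹ ^ j) : j < a.2 := by
  rw [kraftSum_cons] at h
  have := kraftSum_pos ht
  exact (pow_lt_pow_iff_right_of_lt_one₀ (a := (2⁻¹ : ℝ)) (by norm_num) (by norm_num)).1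
    (by linarith)

theorem ne_zero_of_kraftSum_cons_cons_le {a b : G × ℕ} {t : Multiset (G × ℕ)} {j : ℕ}
    (hab : a.2 = b.2) (h : kraftSum (a ::ₘ b ::ₘ t) ≤ 2⁻¹ ^ j) : b.2 ≠ 0 := by
  intro h0
  simp only [kraftSum_cons, hab, h0, pow_zero] at h
  have := kraftSum_nonneg t
  have : (2⁻¹ : ℝ) ^ j ≤ 1 := pow_le_one₀ (by norm_num) (by norm_num)
  linarith

theorem kraftSum_cons_cons_succ (x y z : G) (d : ℕ) (t : Multiset (G × ℕ)) :
    kraftSum ((x, d + 1) ::ₘ (y, d + 1) ::ₘ t) = kraftSum ((z, d) ::ₘ t) := by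
  simp only [kraftSum_cons]
  ring

variable [AddCommMonoid G] {r : G → ℝ}

theorem apply_add_le_of_le_inv_two_pow_succ (hr : ∀ x y, r (x + y) ≤ 2 * max (r x) (r y))
    {x y : G} {d : ℕ} {M : ℝ} (hx : r x ≤ 2⁻¹ ^ (d + 1) * M) (hy : r y ≤ 2⁻¹ ^ (d + 1) * M) :
    r (x + y) ≤ 2⁻¹ ^ d * M :=
  calc r (x + y) ≤ 2 * max (r x) (r y) := hr x y
    _ ≤ 2 * (2⁻¹ ^ (d + 1) * M) := by gcongr; exact max_le hx hy
    _ = 2⁻¹ ^ d * M := by ring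

/-- Induction on the number of vectors: two vectors at the same depth `d + 1` merge into their sum
at depth `d`; if all depths differ, the shallowest vector and the sum of the others (a subtree one
level deeper, by `kraftSum_le_of_nodup`) are added in one step. -/
theorem apply_sum_fst_le_of_kraftSum_le (hr0 : r 0 = 0)
    (hr : ∀ x y, r (x + y) ≤ 2 * max (r x) (r y)) {M : ℝ} (hM : 0 ≤ M)
    (s : Multiset (G × ℕ)) (j : ℕ) (hs : kraftSum s ≤ 2⁻¹ ^ j)
    (hbound : ∀ a ∈ s, r a.1 ≤ 2⁻¹ ^ a.2 * M) : r (s.map Prod.fst).sum ≤ 2⁻¹ ^ j * M := by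
  induction hn : Multiset.card s using Nat.strong_induction_on generalizing s j with
  | _ n ih =>
  subst hn
  by_cases hnd : (s.map Prod.snd).Nodup
  · rcases s.empty_or_exists_mem with rfl | ⟨a₀, ha₀⟩
    · simp only [Multiset.map_zero, Multiset.sum_zero, hr0]
      positivity
    classical
    obtain ⟨a, ha, hmin⟩ := s.toFinset.exists_min_image Prod.snd ⟨a₀, Multiset.mem_toFinset.2 ha₀⟩
    obtain ⟨t, rfl⟩ := Multiset.exists_cons_of_mem (Multiset.mem_toFinset.1 ha)
    rw [Multiset.map_cons, Multiset.nodup_cons] at hnd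
    simp only [Multiset.map_cons, Multiset.sum_cons]
    rcases eq_or_ne t 0 with rfl | ht
    · rw [kraftSum_cons, kraftSum_zero, add_zero] at hs
      simpa using (hbound a (Multiset.mem_cons_self _ _)).trans (mul_le_mul_of_nonneg_right hs hM)
    have hdeeper : ∀ b ∈ t, a.2 < b.2 := fun b hb =>
      (hmin b (by simp [hb])).lt_of_ne fun h => hnd.1 (h ▸ Multiset.mem_map_of_mem _ hb)
    have hrest : r (t.map Prod.fst).sum ≤ 2⁻¹ ^ a.2 * M :=
      ih _ (by simp) t a.2 (kraftSum_le_of_nodup hnd.2 hdeeper)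
        (fun b hb => hbound b (Multiset.mem_cons_of_mem hb)) rfl
    have hlevel : (2⁻¹ : ℝ) ^ a.2 * M ≤ 2⁻¹ ^ (j + 1) * M := mul_le_mul_of_nonneg_right
      (pow_le_pow_of_le_one (by norm_num) (by norm_num) (lt_of_kraftSum_cons_le ht hs)) hM
    exact apply_add_le_of_le_inv_two_pow_succ hr ((hbound a (by simp)).trans hlevel)
      (hrest.trans hlevel)
  · obtain ⟨a, b, t, rfl, hab⟩ := Multiset.exists_eq_cons_cons_of_not_nodup_map hnd
    obtain ⟨d, hd⟩ := Nat.exists_eq_add_one.2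
      (Nat.pos_of_ne_zero (ne_zero_of_kraftSum_cons_cons_le hab hs))
    have hmerge : r (a.1 + b.1) ≤ 2⁻¹ ^ d * M := by
      refine apply_add_le_of_le_inv_two_pow_succ hr ?_ ?_ <;> rw [← hd]
      exacts [hab ▸ hbound a (by simp), hbound b (by simp)]
    have := ih (t.card + 1) (by simp) ((a.1 + b.1, d) ::ₘ t) j
      (by rw [← kraftSum_cons_cons_succ a.1 b.1, ← hd]; simpa only [kraftSum_cons, hab] using hs)
      (by
        simp only [Multiset.mem_cons, forall_eq_or_imp]
        exact ⟨hmerge, fun c hc => hbound c (by simp [hc])⟩) (by simp)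
    simpa [add_assoc] using this

theorem apply_sum_le_two_mul_sum_map_of_forall_pos (hr0 : r 0 = 0)
    (hr : ∀ x y, r (x + y) ≤ 2 * max (r x) (r y)) {s : Multiset G} (hs : ∀ x ∈ s, 0 < r x) :
    r s.sum ≤ 2 * (s.map r).sum := by
  rcases s.empty_or_exists_mem with rfl | ⟨x₀, hx₀⟩
  · simp [hr0]
  set S := (s.map r).sum
  have hle : ∀ x ∈ s, r x ≤ S := fun x hx =>
    Multiset.single_le_sum (Multiset.forall_mem_map_iff.2 fun y hy => (hs y hy).le) _
      (Multiset.mem_map_of_mem r hx)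
  have hS : 0 < S := (hs x₀ hx₀).trans_le (hle x₀ hx₀)
  have hdepth : ∀ x ∈ s, ∃ k : ℕ, (2⁻¹ : ℝ) ^ k ≤ r x / S ∧ r x ≤ 2⁻¹ ^ k * (2 * S) := by
    intro x hx
    obtain ⟨n, hlt, hle⟩ := exists_nat_pow_near_of_lt_one (div_pos (hs x hx) hS)
      ((div_le_one hS).2 (hle x hx)) (by norm_num : (0 : ℝ) < 2⁻¹) (by norm_num)
    refine ⟨n + 1, hlt.le, ?_⟩
    rw [div_le_iff₀ hS] at hle
    calc r x ≤ 2⁻¹ ^ n * S := hle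
      _ = 2⁻¹ ^ (n + 1) * (2 * S) := by ring
  choose! k hk_kraft hk_bound using hdepth
  have hkraft : kraftSum (s.map fun x => (x, k x)) ≤ 2⁻¹ ^ 0 :=
    calc kraftSum (s.map fun x => (x, k x)) = (s.map fun x => (2⁻¹ : ℝ) ^ k x).sum := by
          simp [kraftSum, Multiset.map_map]
      _ ≤ (s.map fun x => r x / S).sum := Multiset.sum_map_le_sum_map _ _ hk_kraft
      _ = 2⁻¹ ^ 0 := by rw [Multiset.sum_map_div, div_self hS.ne', pow_zero]
  simpa [Multiset.map_map, Function.comp_def] using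
    apply_sum_fst_le_of_kraftSum_le hr0 hr (M := 2 * S) (by positivity) _ 0 hkraft
      (by simpa using hk_bound)

theorem apply_sum_le_two_mul_sum_map (hr_nonneg : ∀ x, 0 ≤ r x)
    (hr_eq_zero : ∀ x, r x = 0 ↔ x = 0) (hr : ∀ x y, r (x + y) ≤ 2 * max (r x) (r y))
    (s : Multiset G) : r s.sum ≤ 2 * (s.map r).sum := by
  classical
  set s' := s.filter (· ≠ 0)
  have hsplit := Multiset.filter_add_not (· ≠ 0) s
  have hzero : (s.filter fun x => ¬x ≠ 0).sum = 0 :=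
    Multiset.sum_eq_zero fun x hx => by simpa using (Multiset.mem_filter.1 hx).2
  have hsum : s'.sum = s.sum := by
    conv_rhs => rw [← hsplit]
    rw [Multiset.sum_add, hzero, add_zero]
  have hpos : ∀ x ∈ s', 0 < r x := fun x hx =>
    (hr_nonneg x).lt_of_ne (Ne.symm fun h => (Multiset.mem_filter.1 hx).2 ((hr_eq_zero x).1 h))
  calc r s.sum = r s'.sum := by rw [hsum]
    _ ≤ 2 * (s'.map r).sum :=
      apply_sum_le_two_mul_sum_map_of_forall_pos ((hr_eq_zero 0).2 rfl) hr hpos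
    _ ≤ 2 * (s.map r).sum := by
      gcongr
      conv_rhs => rw [← hsplit]
      rw [Multiset.map_add, Multiset.sum_add, le_add_iff_nonneg_right]
      exact Multiset.sum_nonneg (Multiset.forall_mem_map_iff.2 fun y _ => hr_nonneg y)

end Kraft

section SubadditiveHull

variable {G : Type*} [AddCommMonoid G] {r : G → ℝ}

noncomputable def subadditiveHull (r : G → ℝ) (x : G) : ℝ :=
  ⨅ s : {s : Multiset G // s.sum = x}, (s.1.map r).sum

instance (x : G) : Nonempty {s : Multiset G // s.sum = x} := ⟨⟨{x}, Multiset.sum_singleton x⟩⟩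

theorem bddBelow_range_sum_map (hr : ∀ x, 0 ≤ r x) (x : G) :
    BddBelow (Set.range fun s : {s : Multiset G // s.sum = x} => (s.1.map r).sum) :=
  ⟨0, by rintro _ ⟨_, rfl⟩; exact Multiset.sum_nonneg (Multiset.forall_mem_map_iff.2 fun y _ => hr y)⟩

theorem subadditiveHull_nonneg (hr : ∀ x, 0 ≤ r x) (x : G) : 0 ≤ subadditiveHull r x :=
  le_ciInf fun _ => Multiset.sum_nonneg (Multiset.forall_mem_map_iff.2 fun y _ => hr y)

theorem subadditiveHull_le (hr : ∀ x, 0 ≤ r x) (x : G) : subadditiveHull r x ≤ r x :=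
  (ciInf_le (bddBelow_range_sum_map hr x) ⟨{x}, Multiset.sum_singleton x⟩).trans_eq (by simp)

theorem subadditiveHull_add_le (hr : ∀ x, 0 ≤ r x) (x y : G) :
    subadditiveHull r (x + y) ≤ subadditiveHull r x + subadditiveHull r y :=
  le_ciInf_add_ciInf fun s t =>
    (ciInf_le (bddBelow_range_sum_map hr _) ⟨s.1 + t.1, by rw [Multiset.sum_add, s.2, t.2]⟩).trans_eq
      (by simp)

theorem le_mul_subadditiveHull {c : ℝ} (hc : 0 ≤ c)
    (h : ∀ s : Multiset G, r s.sum ≤ c * (s.map r).sum) (x : G) :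
    r x ≤ c * subadditiveHull r x := by
  rw [subadditiveHull, Real.mul_iInf_of_nonneg hc]
  exact le_ciInf fun ⟨s, hs⟩ => hs ▸ h s

end SubadditiveHull

theorem rpow_add_le_two_mul_max {X : Type*} [Add X] {q : X → ℝ} {C p : ℝ}
    (hq0 : ∀ x, 0 ≤ q x) (hqt : ∀ x y, q (x + y) ≤ C * (q x + q y)) (hp : 0 < p)
    (hpC : (2 : ℝ) ^ (1 / p) = 2 * C) (x y : X) :
    q (x + y) ^ p ≤ 2 * max (q x ^ p) (q y ^ p) := by
  have hC : 0 ≤ C := by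
    have : (0 : ℝ) < 2 ^ (1 / p) := by positivity
    linarith
  have hmax : q (x + y) ≤ 2 ^ (1 / p) * max (q x) (q y) := by
    rw [hpC, mul_comm 2 C, mul_assoc]
    refine (hqt x y).trans (mul_le_mul_of_nonneg_left ?_ hC)
    linarith [le_max_left (q x) (q y), le_max_right (q x) (q y)]
  calc q (x + y) ^ p ≤ (2 ^ (1 / p) * max (q x) (q y)) ^ p :=
        Real.rpow_le_rpow (hq0 _) hmax hp.le
    _ = 2 * max (q x ^ p) (q y ^ p) := by
      rw [Real.mul_rpow (by positivity) (le_max_of_le_left (hq0 x)), one_div,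
        Real.rpow_inv_rpow (by norm_num) hp.ne', Real.rpow_max (hq0 x) (hq0 y) hp.le]

theorem aoki_rolewicz_general {X : Type*} [AddCommGroup X]
    (q : X → ℝ) (C : ℝ)
    (hq0 : ∀ x, 0 ≤ q x)
    (hqz : ∀ x, q x = 0 ↔ x = 0)
    (hqt : ∀ x y, q (x + y) ≤ C * (q x + q y))
    (p : ℝ) (hp0 : 0 < p)
    (hpC : (2 : ℝ) ^ (1 / p) = 2 * C) :
    ∃ (N : X → ℝ) (K : ℝ), 0 < K ∧
      (∀ x y, N (x + y) ^ p ≤ N x ^ p + N y ^ p) ∧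
      (∀ x, (1 / K) * q x ≤ N x ∧ N x ≤ K * q x) := by
  set r : X → ℝ := fun x => q x ^ p
  have hr_nonneg : ∀ x, 0 ≤ r x := fun x => Real.rpow_nonneg (hq0 x) p
  have hr_sum : ∀ s : Multiset X, r s.sum ≤ 2 * (s.map r).sum :=
    apply_sum_le_two_mul_sum_map hr_nonneg
      (fun x => (Real.rpow_eq_zero (hq0 x) hp0.ne').trans (hqz x))
      (rpow_add_le_two_mul_max hq0 hqt hp0 hpC)
  have hN_nonneg := subadditiveHull_nonneg hr_nonneg
  have hq : ∀ x, r x ^ p⁻¹ = q x := fun x => Real.rpow_rpow_inv (hq0 x) hp0.ne'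
  refine ⟨fun x => subadditiveHull r x ^ p⁻¹, 2 ^ (1 / p), by positivity, fun x y => ?_,
    fun x => ⟨?_, ?_⟩⟩
  · simp only [Real.rpow_inv_rpow (hN_nonneg _) hp0.ne']
    exact subadditiveHull_add_le hr_nonneg x y
  · rw [one_div, inv_mul_le_iff₀ (by positivity), ← hq x, one_div,
      ← Real.mul_rpow two_pos.le (hN_nonneg x)]
    exact Real.rpow_le_rpow (hr_nonneg x)
      (le_mul_subadditiveHull two_pos.le hr_sum x) (by positivity)
  · calc subadditiveHull r x ^ p⁻¹ ≤ r x ^ p⁻¹ :=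
          Real.rpow_le_rpow (hN_nonneg x) (subadditiveHull_le hr_nonneg x) (by positivity)
      _ = q x := hq x
      _ ≤ 2 ^ (1 / p) * q x :=
          le_mul_of_one_le_left (hq0 x) (Real.one_le_rpow (by norm_num) (by positivity))

/-- Aoki–Rolewicz theorem: a quasi-norm with constant `C ≥ 1` is equivalent to a
`p`-norm, where `2 ^ (1/p) = 2 * C`. -/
theorem aoki_rolewicz {X : Type*} [AddCommGroup X] [Module ℝ X]
    (q : X → ℝ) (C : ℝ) (hC : 1 ≤ C)
    (hq0 : ∀ x, 0 ≤ q x)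
    (hqz : ∀ x, q x = 0 ↔ x = 0)
    (hqh : ∀ (a : ℝ) (x : X), q (a • x) = |a| * q x)
    (hqt : ∀ x y, q (x + y) ≤ C * (q x + q y))
    (p : ℝ) (hp0 : 0 < p) (hp1 : p ≤ 1)
    (hpC : (2 : ℝ) ^ (1 / p) = 2 * C) :
    ∃ (N : X → ℝ) (K : ℝ), 0 < K ∧
      (∀ x y, N (x + y) ^ p ≤ N x ^ p + N y ^ p) ∧
      (∀ x, (1 / K) * q x ≤ N x ∧ N x ≤ K * q x) :=
  aoki_rolewicz_general q C hq0 hqz hqt p hp0 hpC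
end

section
/- For the couple (L¹, L^∞) on a σ-finite measure space, the K-functional satisfies K(t, f; L¹, L^∞) = ∫₀^t f*(s) ds, where f* is the decreasing rearrangement of |f|. -/
/-!
By the layer-cake formula, `∫₀ᵗ f* = ∫₀^∞ min (μ_f c) t dc`, where `μ_f c = μ {|f| > c}`.
Cutting this integral at a level `a` bounds it by `t a + ‖(|f| - a)₊‖₁`, with equality at
`a = f*(t)`, because `μ_f > t` below `f*(t)` and `μ_f ≤ t` above it. Every decomposition
`f = g + h` has `(|f| - ‖h‖_∞)₊ ≤ |g|`, so `t a + ‖(|f| - a)₊‖₁` at `a = ‖h‖_∞` is at most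
`‖g‖₁ + t ‖h‖_∞`; conversely, clamping `f` to `[-a, a]` gives a decomposition costing at most
`t a + ‖(|f| - a)₊‖₁`.
-/

open MeasureTheory
open scoped ENNReal

/-- The decreasing rearrangement `f*(s) = inf {λ : μ{|f| > λ} ≤ s}`. -/
noncomputable def decRearr {α : Type*} [MeasurableSpace α] (μ : Measure α)
    (f : α → ℝ) (s : ℝ) : ℝ≥0∞ :=
  sInf {l : ℝ≥0∞ | μ {x | l < (‖f x‖₊ : ℝ≥0∞)} ≤ ENNReal.ofReal s}

open Set Filter

theorem volume_setOf_pos_ofReal_lt (a : ℝ≥0∞) :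
    volume {s : ℝ | 0 < s ∧ ENNReal.ofReal s < a} = a := by
  rcases eq_or_ne a ∞ with rfl | ha
  · convert Real.volume_Ioi (a := 0) using 2
    ext s
    simp
  · have : {s : ℝ | 0 < s ∧ ENNReal.ofReal s < a} = Ioo 0 a.toReal := by
      ext s
      exact and_congr_right fun hs => ENNReal.ofReal_lt_iff_lt_toReal hs.le ha
    rw [this, Real.volume_Ioo, sub_zero, ENNReal.ofReal_toReal ha]

theorem lintegral_eq_lintegral_meas_ofReal_lt {β : Type*} [MeasurableSpace β] (ν : Measure β)
    {G : β → ℝ≥0∞} (hG : AEMeasurable G ν) :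
    ∫⁻ x, G x ∂ν = ∫⁻ c in Ioi 0, ν {x | ENNReal.ofReal c < G x} := by
  by_cases hinf : ν {x | G x = ∞} = 0
  · have hfin : ∀ᵐ x ∂ν, G x ≠ ∞ := measure_eq_zero_iff_ae_notMem.1 hinf
    calc ∫⁻ x, G x ∂ν = ∫⁻ x, ENNReal.ofReal (G x).toReal ∂ν :=
          lintegral_congr_ae (hfin.mono fun x hx => (ENNReal.ofReal_toReal hx).symm)
      _ = ∫⁻ c in Ioi 0, ν {x | c < (G x).toReal} :=
          lintegral_eq_lintegral_meas_lt ν (ae_of_all _ fun _ => ENNReal.toReal_nonneg)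
            hG.ennreal_toReal
      _ = _ := by
          refine setLIntegral_congr_fun measurableSet_Ioi fun c hc => measure_congr ?_
          filter_upwards [hfin] with x hx
          exact propext (ENNReal.ofReal_lt_iff_lt_toReal (le_of_lt hc) hx).symm
  · rw [lintegral_eq_top_of_measure_eq_top_ne_zero hG hinf, eq_comm, eq_top_iff]
    calc ∞ = ∫⁻ _ in Ioi (0 : ℝ), ν {x | G x = ∞} := by
          rw [setLIntegral_const, Real.volume_Ioi, ENNReal.mul_top hinf]
      _ ≤ _ := lintegral_mono fun c => measure_mono fun x (hx : G x = ∞) => by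
          simp [hx]

theorem setLIntegral_Ioi_eq_Ioc_add_comp_add_right (φ : ℝ → ℝ≥0∞) {r : ℝ} (hr : 0 ≤ r) :
    ∫⁻ c in Ioi 0, φ c = (∫⁻ c in Ioc 0 r, φ c) + ∫⁻ c in Ioi 0, φ (c + r) := by
  have hshift := (measurePreserving_add_right volume r).setLIntegral_comp_emb
    (Homeomorph.addRight r).measurableEmbedding φ (Ioi 0)
  rw [hshift, image_add_const_Ioi, zero_add, ← Ioc_union_Ioi_eq_Ioi hr,
    lintegral_union measurableSet_Ioi Ioc_disjoint_Ioi_same]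

theorem measure_setOf_lt_le_of_forall_lt {α : Type*} [MeasurableSpace α] {μ : Measure α}
    {F : α → ℝ≥0∞} {c b : ℝ≥0∞} (h : ∀ l, c < l → μ {x | l < F x} ≤ b) :
    μ {x | c < F x} ≤ b := by
  rcases eq_or_ne c ∞ with rfl | hc
  · simp
  obtain ⟨u, hu_anti, hu_mem, hu_lim⟩ := exists_seq_strictAnti_tendsto' hc.lt_top
  have hunion : {x | c < F x} = ⋃ n, {x | u n < F x} := by
    ext x
    simp only [mem_ofPred_eq, mem_iUnion]
    exact ⟨fun hx => (hu_lim.eventually (gt_mem_nhds hx)).exists,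
      fun ⟨n, hn⟩ => (hu_mem n).1.trans hn⟩
  have hmono : Monotone fun n => {x | u n < F x} := fun m n hmn x (hx : u m < F x) =>
    (hu_anti.antitone hmn).trans_lt hx
  rw [hunion, hmono.measure_iUnion]
  exact iSup_le fun n => h _ (hu_mem n).1

section Distribution

variable {α : Type*} [MeasurableSpace α]

def distribution {E : Type*} [ENorm E] (μ : Measure α) (f : α → E) (c : ℝ≥0∞) : ℝ≥0∞ :=
  μ {x | c < ‖f x‖ₑ}

variable {μ : Measure α}

theorem distribution_antitone {E : Type*} [ENorm E] (f : α → E) :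
    Antitone (distribution μ f) :=
  fun _ _ h => measure_mono fun _ hx => h.trans_lt hx

theorem lintegral_enorm_sub_eq_lintegral_distribution {E : Type*} [NormedAddCommGroup E]
    {f : α → E} (hf : AEStronglyMeasurable f μ) (a : ℝ≥0∞) :
    ∫⁻ x, ‖f x‖ₑ - a ∂μ = ∫⁻ c in Ioi 0, distribution μ f (a + ENNReal.ofReal c) := by
  rw [lintegral_eq_lintegral_meas_ofReal_lt μ (G := fun x => ‖f x‖ₑ - a)
    (hf.enorm.sub aemeasurable_const)]
  simp_rw [lt_tsub_iff_left]
  rfl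

variable {f : α → ℝ}

theorem decRearr_le_iff {s : ℝ} {c : ℝ≥0∞} :
    decRearr μ f s ≤ c ↔ distribution μ f c ≤ ENNReal.ofReal s := by
  refine ⟨fun h => measure_setOf_lt_le_of_forall_lt fun l hl => ?_, fun h => sInf_le h⟩
  obtain ⟨l', hl', hl'l⟩ := sInf_lt_iff.1 (h.trans_lt hl)
  exact (measure_mono fun x (hx : l < _) => hl'l.trans hx).trans hl'

theorem lt_decRearr_iff {s : ℝ} {c : ℝ≥0∞} :
    c < decRearr μ f s ↔ ENNReal.ofReal s < distribution μ f c := by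
  simpa only [not_le] using decRearr_le_iff.not

theorem decRearr_antitone : Antitone (decRearr μ f) :=
  fun _ _ h => sInf_le_sInf fun _ hl => hl.trans (ENNReal.ofReal_le_ofReal h)

theorem setLIntegral_Ioc_decRearr (t : ℝ) :
    ∫⁻ s in Ioc 0 t, decRearr μ f s =
      ∫⁻ c in Ioi 0, min (distribution μ f (ENNReal.ofReal c)) (ENNReal.ofReal t) := by
  rw [← setLIntegral_congr Ioo_ae_eq_Ioc,
    lintegral_eq_lintegral_meas_ofReal_lt _ decRearr_antitone.measurable.aemeasurable]
  refine setLIntegral_congr_fun measurableSet_Ioi fun c _ => ?_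
  rw [Measure.restrict_apply' measurableSet_Ioo]
  convert volume_setOf_pos_ofReal_lt _ using 2
  ext s
  simp only [mem_inter_iff, mem_ofPred_eq, mem_Ioo, lt_decRearr_iff, lt_min_iff,
    ENNReal.ofReal_lt_ofReal_iff']
  grind

end Distribution

section MinDistribution

variable {α : Type*} [MeasurableSpace α] {μ : Measure α}

theorem lintegral_min_distribution_le {E : Type*} [ENorm E] (f : α → E) (T a : ℝ≥0∞) :
    ∫⁻ c in Ioi 0, min (distribution μ f (ENNReal.ofReal c)) T ≤
      T * a + ∫⁻ c in Ioi 0, distribution μ f (a + ENNReal.ofReal c) := by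
  rcases eq_or_ne a ∞ with rfl | ha
  · rcases eq_or_ne T 0 with rfl | hT
    · simp
    · simp [ENNReal.mul_top hT]
  rw [setLIntegral_Ioi_eq_Ioc_add_comp_add_right _ ENNReal.toReal_nonneg]
  gcongr ?_ + ?_
  · calc ∫⁻ c in Ioc 0 a.toReal, min (distribution μ f (ENNReal.ofReal c)) T
        ≤ ∫⁻ _ in Ioc 0 a.toReal, T := lintegral_mono fun _ => min_le_right _ _
      _ = T * a := by rw [setLIntegral_const, Real.volume_Ioc, sub_zero, ENNReal.ofReal_toReal ha]
  · refine setLIntegral_mono' measurableSet_Ioi fun c hc => (min_le_left _ _).trans_eq ?_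
    rw [ENNReal.ofReal_add (le_of_lt hc) ENNReal.toReal_nonneg, ENNReal.ofReal_toReal ha,
      add_comm]

variable {f : α → ℝ}

theorem le_lintegral_min_distribution {t : ℝ} (h : decRearr μ f t ≠ ∞) :
    ENNReal.ofReal t * decRearr μ f t +
        ∫⁻ c in Ioi 0, distribution μ f (decRearr μ f t + ENNReal.ofReal c) ≤
      ∫⁻ c in Ioi 0, min (distribution μ f (ENNReal.ofReal c)) (ENNReal.ofReal t) := by
  set a := decRearr μ f t
  conv_rhs => rw [setLIntegral_Ioi_eq_Ioc_add_comp_add_right _ (ENNReal.toReal_nonneg (a := a))]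
  gcongr ?_ + ?_
  · calc ENNReal.ofReal t * a = ∫⁻ _ in Ioo 0 a.toReal, ENNReal.ofReal t := by
          rw [setLIntegral_const, Real.volume_Ioo, sub_zero, ENNReal.ofReal_toReal h, mul_comm]
      _ = ∫⁻ c in Ioo 0 a.toReal, min (distribution μ f (ENNReal.ofReal c)) (ENNReal.ofReal t) :=
          setLIntegral_congr_fun measurableSet_Ioo fun c hc => (min_eq_right
            (lt_decRearr_iff.1 ((ENNReal.ofReal_lt_iff_lt_toReal hc.1.le h).2 hc.2)).le).symm
      _ ≤ _ := lintegral_mono_set Ioo_subset_Ioc_self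
  · refine (setLIntegral_congr_fun measurableSet_Ioi fun c hc => ?_).le
    have hle : distribution μ f (ENNReal.ofReal c + a) ≤ ENNReal.ofReal t :=
      (distribution_antitone f le_add_self).trans (decRearr_le_iff.1 le_rfl)
    rw [ENNReal.ofReal_add (le_of_lt hc) ENNReal.toReal_nonneg, ENNReal.ofReal_toReal h,
      min_eq_left hle, add_comm]

theorem lintegral_min_distribution_eq_top {t : ℝ} (ht : 0 < t) (h : decRearr μ f t = ∞) :
    ∫⁻ c in Ioi 0, min (distribution μ f (ENNReal.ofReal c)) (ENNReal.ofReal t) = ∞ := by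
  rw [setLIntegral_congr_fun measurableSet_Ioi fun c _ => min_eq_right
    (lt_decRearr_iff.1 (h ▸ ENNReal.ofReal_lt_top)).le, setLIntegral_const, Real.volume_Ioi,
    ENNReal.mul_top (ENNReal.ofReal_pos.2 ht).ne']

end MinDistribution

theorem enorm_sub_max_neg_min (y : ℝ) {r : ℝ} (hr : 0 ≤ r) :
    ‖y - max (-r) (min r y)‖ₑ = ‖y‖ₑ - ENNReal.ofReal r := by
  rw [Real.enorm_eq_ofReal_abs, Real.enorm_eq_ofReal_abs, ← ENNReal.ofReal_sub _ hr]
  have key : |y - max (-r) (min r y)| = max (|y| - r) 0 := by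
    simp only [abs_eq_max_neg, max_def, min_def]
    split_ifs <;> linarith
  rw [key, ENNReal.ofReal_max, ENNReal.ofReal_zero, max_zero]

theorem abs_max_neg_min_le (y : ℝ) {r : ℝ} (hr : 0 ≤ r) : |max (-r) (min r y)| ≤ r :=
  abs_le.2 ⟨le_max_left _ _, max_le (neg_le_self hr) (min_le_left _ _)⟩

section KFunctional

variable {α : Type*} [MeasurableSpace α]

noncomputable def kFunctional (μ : Measure α) (f : α → ℝ) (t : ℝ) : ℝ≥0∞ :=
  ⨅ (g : α → ℝ) (h : α → ℝ) (_ : Measurable g) (_ : Measurable h) (_ : f = g + h),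
    eLpNorm g 1 μ + ENNReal.ofReal t * eLpNorm h ⊤ μ

variable {μ : Measure α} {f : α → ℝ} {t : ℝ}

theorem kFunctional_le_lintegral_enorm_sub (hf : Measurable f) {a : ℝ≥0∞} (ha : a ≠ ∞) :
    kFunctional μ f t ≤ ENNReal.ofReal t * a + ∫⁻ x, ‖f x‖ₑ - a ∂μ := by
  set h : α → ℝ := fun x => max (-a.toReal) (min a.toReal (f x))
  have hh : Measurable h := measurable_const.max (measurable_const.min hf)
  have hg_norm : eLpNorm (f - h) 1 μ = ∫⁻ x, ‖f x‖ₑ - a ∂μ := by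
    rw [eLpNorm_one_eq_lintegral_enorm]
    refine lintegral_congr fun x => ?_
    rw [← ENNReal.ofReal_toReal ha]
    exact enorm_sub_max_neg_min (f x) ENNReal.toReal_nonneg
  have hh_norm : eLpNorm h ⊤ μ ≤ a := by
    rw [eLpNorm_exponent_top, ← ENNReal.ofReal_toReal ha]
    exact eLpNormEssSup_le_of_ae_bound (ae_of_all _ fun x =>
      abs_max_neg_min_le (f x) ENNReal.toReal_nonneg)
  calc kFunctional μ f t ≤ eLpNorm (f - h) 1 μ + ENNReal.ofReal t * eLpNorm h ⊤ μ :=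
        iInf₂_le_of_le (f - h) h <| iInf₂_le_of_le (hf.sub hh) hh <|
          iInf_le_of_le (sub_add_cancel f h).symm le_rfl
    _ ≤ ENNReal.ofReal t * a + ∫⁻ x, ‖f x‖ₑ - a ∂μ := by
        rw [hg_norm, add_comm]
        gcongr

theorem lintegral_min_distribution_le_kFunctional :
    ∫⁻ c in Ioi 0, min (distribution μ f (ENNReal.ofReal c)) (ENNReal.ofReal t) ≤
      kFunctional μ f t := by
  simp only [kFunctional, le_iInf_iff]
  rintro g h hg hh rfl
  set M := eLpNorm h ⊤ μ with hM
  have hgh : ∫⁻ x, ‖(g + h) x‖ₑ - M ∂μ ≤ eLpNorm g 1 μ := by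
    rw [eLpNorm_one_eq_lintegral_enorm]
    refine lintegral_mono_ae ?_
    filter_upwards [ae_le_eLpNormEssSup (f := h) (μ := μ)] with x hx
    rw [tsub_le_iff_right]
    exact (enorm_add_le _ _).trans (by rw [hM, eLpNorm_exponent_top]; gcongr)
  calc _ ≤ ENNReal.ofReal t * M + ∫⁻ c in Ioi 0, distribution μ (g + h) (M + ENNReal.ofReal c) :=
        lintegral_min_distribution_le _ _ M
    _ = ENNReal.ofReal t * M + ∫⁻ x, ‖(g + h) x‖ₑ - M ∂μ := by
        rw [lintegral_enorm_sub_eq_lintegral_distribution (hg.add hh).aestronglyMeasurable]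
    _ ≤ eLpNorm g 1 μ + ENNReal.ofReal t * M := by
        rw [add_comm]
        gcongr

end KFunctional

theorem K_functional_L1_Linfty_general {α : Type*} [MeasurableSpace α]
    (μ : Measure α) (f : α → ℝ) (hf : Measurable f)
    (t : ℝ) (ht : 0 < t) :
    (⨅ (g : α → ℝ) (h : α → ℝ) (_ : Measurable g) (_ : Measurable h)
        (_ : f = g + h), eLpNorm g 1 μ + ENNReal.ofReal t * eLpNorm h ⊤ μ) =
      ∫⁻ s in Set.Ioc (0:ℝ) t, decRearr μ f s := by
  change kFunctional μ f t = _
  rw [setLIntegral_Ioc_decRearr]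
  refine le_antisymm ?_ lintegral_min_distribution_le_kFunctional
  rcases eq_or_ne (decRearr μ f t) ∞ with h | h
  · rw [lintegral_min_distribution_eq_top ht h]
    exact le_top
  · calc kFunctional μ f t
        ≤ ENNReal.ofReal t * decRearr μ f t + ∫⁻ x, ‖f x‖ₑ - decRearr μ f t ∂μ :=
          kFunctional_le_lintegral_enorm_sub hf h
      _ = ENNReal.ofReal t * decRearr μ f t +
            ∫⁻ c in Ioi 0, distribution μ f (decRearr μ f t + ENNReal.ofReal c) := by
          rw [lintegral_enorm_sub_eq_lintegral_distribution hf.aestronglyMeasurable]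
      _ ≤ _ := le_lintegral_min_distribution h

/-- For the couple `(L¹, L∞)` the K-functional is
`K(t, f) = ∫₀ᵗ f*(s) ds`. -/
theorem K_functional_L1_Linfty {α : Type*} [MeasurableSpace α]
    (μ : Measure α) [SigmaFinite μ] (f : α → ℝ) (hf : Measurable f)
    (t : ℝ) (ht : 0 < t) :
    (⨅ (g : α → ℝ) (h : α → ℝ) (_ : Measurable g) (_ : Measurable h)
        (_ : f = g + h), eLpNorm g 1 μ + ENNReal.ofReal t * eLpNorm h ⊤ μ) =
      ∫⁻ s in Set.Ioc (0:ℝ) t, decRearr μ f s :=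
  K_functional_L1_Linfty_general μ f hf t ht
end
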